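/- arXiv:1206.4793 — 3 statements merged into one kernel-verified Lean document; each statement's English description precedes it below -/
import Mathlib

section
/- For every algebraic number α and every nonzero natural number k, the quotient ring ℤ[α]/(k) is finite. -/
/-!
Write `A = ℤ[α]`. Since `A ⧸ (ab)` is covered by `A ⧸ (a) × A ⧸ (b)` via
`(u, v) ↦ u + a v`, it suffices to treat a prime `k = p`. Let `f` be a primitive integer
polynomial vanishing at `α`. Then `A ⧸ (p)` is generated over `𝔽_p` by the image of `α`,
which is a root of the nonzero reduction of `f` mod `p`; so it is a finite-dimensional
`𝔽_p`-vector space.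
-/

open Polynomial

theorem Ideal.finite_quotient_span_singleton_mul {A : Type*} [CommRing A] {a b : A}
    (ha : Finite (A ⧸ Ideal.span {a})) (hb : Finite (A ⧸ Ideal.span {b})) :
    Finite (A ⧸ Ideal.span {a * b}) := by
  obtain ⟨s, hs⟩ := (Ideal.Quotient.mk_surjective (I := Ideal.span {a})).hasRightInverse
  obtain ⟨s', hs'⟩ := (Ideal.Quotient.mk_surjective (I := Ideal.span {b})).hasRightInverse
  refine Finite.of_surjective
    (fun uv : (A ⧸ Ideal.span {a}) × (A ⧸ Ideal.span {b}) ↦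
      Ideal.Quotient.mk (Ideal.span {a * b}) (s uv.1 + a * s' uv.2)) ?_
  rintro ⟨x⟩
  obtain ⟨y, hy⟩ := Ideal.mem_span_singleton'.mp
    (Ideal.Quotient.eq.mp (hs (Ideal.Quotient.mk _ x)).symm)
  obtain ⟨z, hz⟩ := Ideal.mem_span_singleton'.mp
    (Ideal.Quotient.eq.mp (hs' (Ideal.Quotient.mk _ y)).symm)
  refine ⟨(Ideal.Quotient.mk _ x, Ideal.Quotient.mk _ y), Ideal.Quotient.eq.mpr ?_⟩
  exact Ideal.mem_span_singleton'.mpr ⟨-z, by linear_combination -hy - a * hz⟩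

theorem Ideal.finite_quotient_span_natCast_of_forall_prime {A : Type*} [CommRing A]
    (h : ∀ p : ℕ, p.Prime → Finite (A ⧸ Ideal.span {(p : A)})) {k : ℕ} (hk : k ≠ 0) :
    Finite (A ⧸ Ideal.span {(k : A)}) := by
  induction k using Nat.recOnMul with
  | zero => exact absurd rfl hk
  | one => simp only [Nat.cast_one, Ideal.span_singleton_one]; infer_instance
  | prime p hp => exact h p hp
  | mul a b iha ihb =>
    rw [Nat.cast_mul]
    exact Ideal.finite_quotient_span_singleton_mul (iha (left_ne_zero_of_mul hk))
      (ihb (right_ne_zero_of_mul hk))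

theorem finite_of_adjoin_singleton_eq_top_of_isAlgebraic {K B : Type*} [Field K] [Finite K]
    [CommRing B] [Algebra K B] {t : B} (ht : Algebra.adjoin K {t} = ⊤)
    (halg : IsAlgebraic K t) : Finite B := by
  have : Module.Finite K B := ⟨by simpa [ht] using halg.isIntegral.fg_adjoin_singleton⟩
  exact Module.finite_of_finite K

theorem Polynomial.IsPrimitive.map_intCast_ne_zero {f : ℤ[X]} (hf : f.IsPrimitive) (p : ℕ)
    [hp : Fact p.Prime] : f.map (Int.castRingHom (ZMod p)) ≠ 0 := by
  intro h0
  have hdvd : C (p : ℤ) ∣ f := (C_dvd_iff_dvd_coeff _ _).mpr fun i ↦ by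
    simpa [← ZMod.intCast_zmod_eq_zero_iff_dvd] using congrArg (coeff · i) h0
  exact hp.out.not_dvd_one (Int.natCast_dvd_ofNat.mp (isUnit_iff_dvd_one.mp (hf _ hdvd)))

theorem IsAlgebraic.exists_isPrimitive_aeval_eq_zero {R S : Type*} [CommRing R] [IsDomain R]
    [NormalizedGCDMonoid R] [Ring S] [IsDomain S] [Algebra R S] [Module.IsTorsionFree R S]
    {s : S} (hs : IsAlgebraic R s) : ∃ f : R[X], f.IsPrimitive ∧ aeval s f = 0 :=
  let ⟨q, hq, hqs⟩ := hs
  ⟨q.primPart, isPrimitive_primPart q, aeval_primPart_eq_zero hq hqs⟩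

theorem Algebra.adjoin_singleton_self_eq_top {R A : Type*} [CommRing R] [CommRing A]
    [Algebra R A] (a : A) :
    Algebra.adjoin R {(⟨a, Algebra.self_mem_adjoin_singleton R a⟩ : Algebra.adjoin R {a})} =
      ⊤ := by
  convert Algebra.adjoin_adjoin_coe_preimage (R := R) (s := {a})
  ext ⟨y, hy⟩
  simp

theorem finite_quotient_span_prime_of_adjoin_eq_top {A : Type*} [CommRing A] {x : A}
    (hx : Algebra.adjoin ℤ {x} = ⊤) {f : ℤ[X]} (hf : f.IsPrimitive) (hfx : aeval x f = 0)
    (p : ℕ) [Fact p.Prime] : Finite (A ⧸ Ideal.span {(p : A)}) := by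
  by_cases hunit : IsUnit (p : A)
  · rw [Ideal.span_singleton_eq_top.mpr hunit]
    infer_instance
  have := CharP.quotient A p hunit
  let := ZMod.algebra (A ⧸ Ideal.span {(p : A)}) p
  set π := Ideal.Quotient.mkₐ ℤ (Ideal.span {(p : A)})
  refine finite_of_adjoin_singleton_eq_top_of_isAlgebraic (K := ZMod p) (t := π x) ?_ ?_
  · have hπx : Algebra.adjoin ℤ {π x} = ⊤ := by
      have := Algebra.adjoin_image ℤ π {x}
      rwa [Set.image_singleton, hx, Algebra.map_top,
        (AlgHom.range_eq_top π).mpr (Ideal.Quotient.mkₐ_surjective ℤ _)] at this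
    rw [← Algebra.adjoin_adjoin_of_tower ℤ, hπx, Algebra.coe_top, Algebra.adjoin_univ]
  · refine ⟨f.map (Int.castRingHom (ZMod p)), hf.map_intCast_ne_zero p, ?_⟩
    rw [← algebraMap_int_eq, aeval_map_algebraMap, aeval_algHom_apply, hfx, map_zero]

/-- For every algebraic number `α` and every nonzero natural number `k`,
the quotient ring `ℤ[α]/(k)` is finite. -/
theorem stmt_0 (α : AlgebraicClosure ℚ) (k : ℕ) (hk : k ≠ 0) :
    Finite ((Algebra.adjoin ℤ ({α} : Set (AlgebraicClosure ℚ))) ⧸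
      Ideal.span {(k : Algebra.adjoin ℤ ({α} : Set (AlgebraicClosure ℚ)))}) := by
  set x : Algebra.adjoin ℤ {α} := ⟨α, Algebra.self_mem_adjoin_singleton ℤ α⟩
  have hx : IsAlgebraic ℤ x := by
    rw [← isAlgebraic_algHom_iff (Algebra.adjoin ℤ {α}).val Subtype.val_injective]
    exact (IsFractionRing.isAlgebraic_iff ℤ ℚ _).mpr
      ((AlgebraicClosure.isAlgebraic ℚ).isAlgebraic α)
  obtain ⟨f, hf, hfx⟩ := hx.exists_isPrimitive_aeval_eq_zero
  refine Ideal.finite_quotient_span_natCast_of_forall_prime (fun p hp ↦ ?_) hk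
  have : Fact p.Prime := ⟨hp⟩
  exact finite_quotient_span_prime_of_adjoin_eq_top
    (Algebra.adjoin_singleton_self_eq_top α) hf hfx p
end

section
/- Let F be a finite field, R a subring of the rational function field F(t) which is an F-algebra, and α ∈ R an invertible element that is not a root of unity. Then for every nonzero ideal I of R, the intersection I ∩ F[α, α⁻¹] is nonzero. -/
set_option maxHeartbeats 1000000
set_option synthInstance.maxHeartbeats 1000000

open Polynomial IntermediateField

/-- Let `F` be a finite field, `R` a subring of the rational function field `F(t)` which
is an `F`-algebra, and `α ∈ R` an invertible element that is not a root of unity. Then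
for every nonzero ideal `I` of `R`, the intersection `I ∩ F[α, α⁻¹]` is nonzero. -/
theorem stmt_4 (F : Type*) [Field F] [Finite F] (R : Subalgebra F (RatFunc F))
    (α : Rˣ) (hα : ∀ m : ℕ, 1 ≤ m → α ^ m ≠ 1)
    (I : Ideal R) (hI : I ≠ ⊥) :
    ∃ β : R, β ∈ I ∧ β ≠ 0 ∧
      β ∈ Algebra.adjoin F ({(α : R), ((α⁻¹ : Rˣ) : R)} : Set R) := by
  classical
  set a : RatFunc F := ((α : R) : RatFunc F) with ha_def
  have ha0 : a ≠ 0 := by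
    simp only [ha_def, ne_eq, ZeroMemClass.coe_eq_zero]
    intro h
    have h1 : ((α : R) * ((α⁻¹ : Rˣ) : R) : R) = 1 := by
      rw [← Units.val_mul, mul_inv_cancel, Units.val_one]
    rw [h, zero_mul] at h1
    exact zero_ne_one h1
  -- `a` is transcendental over `F`
  have htrans : Transcendental F a := by
    intro halg
    have hint : IsIntegral F a := isAlgebraic_iff_isIntegral.mp halg
    have hfin : Module.Finite F (Algebra.adjoin F ({a} : Set (RatFunc F))) :=
      ⟨(Submodule.fg_top _).mpr hint.fg_adjoin_singleton⟩
    have hfin2 : Finite (Algebra.adjoin F ({a} : Set (RatFunc F))) := Module.finite_of_finite F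
    have haS : a ∈ Algebra.adjoin F ({a} : Set (RatFunc F)) :=
      Algebra.subset_adjoin (Set.mem_singleton a)
    obtain ⟨i, j, hij, hpow⟩ := Finite.exists_ne_map_eq_of_infinite
      (fun n : ℕ => (⟨a, haS⟩ : Algebra.adjoin F ({a} : Set (RatFunc F))) ^ n)
    have hpow'' : a ^ i = a ^ j := by
      have := congrArg Subtype.val hpow
      simpa using this
    clear hpow
    wlog hlt : i < j generalizing i j
    · exact this j i hij.symm hpow''.symm (by omega)
    have hpow' : a ^ i = a ^ j := hpow''
    have hm : a ^ (j - i) = 1 := by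
      have : a ^ i * a ^ (j - i) = a ^ i * 1 := by
        rw [mul_one, ← pow_add]
        rw [hpow']
        congr 1
        omega
      exact mul_left_cancel₀ (pow_ne_zero _ ha0) this
    refine hα (j - i) (by omega) (Units.ext ?_)
    have hco : (((α : R) ^ (j - i) : R) : RatFunc F) = ((1 : R) : RatFunc F) := by
      push_cast
      rw [← ha_def]
      simpa using hm
    have h2 : ((α : R) ^ (j - i) : R) = 1 := Subtype.coe_injective hco
    rw [Units.val_pow_eq_pow_val, Units.val_one]
    exact h2
  -- auxiliary: aeval at RatFunc.X is the algebra map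
  have key : ∀ f : F[X], Polynomial.aeval (RatFunc.X : RatFunc F) f = algebraMap F[X] (RatFunc F) f := by
    intro f
    have := Polynomial.aeval_algHom_apply (IsScalarTower.toAlgHom F F[X] (RatFunc F)) Polynomial.X f
    rwa [Polynomial.aeval_X_left_apply, IsScalarTower.coe_toAlgHom',
      RatFunc.algebraMap_X] at this
  set L : IntermediateField F (RatFunc F) := F⟮a⟯ with hL
  have haL : a ∈ L := IntermediateField.mem_adjoin_simple_self F a
  -- `RatFunc.X` is algebraic over `L`
  have hXalg : IsAlgebraic L (RatFunc.X : RatFunc F) := by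
    set p0 : F[X] := (RatFunc.num a) with hp0
    set q0 : F[X] := (RatFunc.denom a) with hq0
    have hq0' : q0 ≠ 0 := RatFunc.denom_ne_zero a
    refine ⟨Polynomial.C (⟨a, haL⟩ : L) * (q0.map (algebraMap F L)) -
      p0.map (algebraMap F L), ?_, ?_⟩
    · intro h
      rw [sub_eq_zero] at h
      have hcoeff := congrArg (fun r => Polynomial.coeff r q0.natDegree) h
      simp only [Polynomial.coeff_C_mul, Polynomial.coeff_map] at hcoeff
      have hqc : q0.coeff q0.natDegree ≠ 0 := by
        rw [← Polynomial.leadingCoeff]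
        exact Polynomial.leadingCoeff_ne_zero.mpr hq0'
      have hqL : algebraMap F L (q0.coeff q0.natDegree) ≠ 0 := by
        intro h0
        exact hqc ((_root_.map_eq_zero (algebraMap F L)).mp h0)
      have hthis : (⟨a, haL⟩ : L) =
          algebraMap F L (p0.coeff q0.natDegree / q0.coeff q0.natDegree) := by
        rw [map_div₀, eq_div_iff hqL]
        linear_combination hcoeff
      have ha' : a = algebraMap F (RatFunc F) (p0.coeff q0.natDegree / q0.coeff q0.natDegree) := by
        have := congrArg (algebraMap L (RatFunc F)) hthis
        rwa [← IsScalarTower.algebraMap_apply F L (RatFunc F)] at this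
      exact htrans (ha' ▸ isAlgebraic_algebraMap _)
    · have hmain : a * algebraMap F[X] (RatFunc F) q0 = algebraMap F[X] (RatFunc F) p0 := by
        have hden : algebraMap F[X] (RatFunc F) q0 ≠ 0 :=
          RatFunc.algebraMap_ne_zero hq0'
        conv_lhs => rw [← RatFunc.num_div_denom a]
        exact div_mul_cancel₀ _ hden
      simp only [map_sub, map_mul, Polynomial.aeval_C]
      rw [Polynomial.aeval_map_algebraMap, Polynomial.aeval_map_algebraMap, key, key]
      have : (algebraMap L (RatFunc F)) (⟨a, haL⟩ : L) = a := rfl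
      rw [this, hmain, sub_self]
  have hXint : IsIntegral L (RatFunc.X : RatFunc F) := isAlgebraic_iff_isIntegral.mp hXalg
  -- every element of `K` is algebraic over `L`
  have h1 : ∀ f : F[X], IsIntegral L (algebraMap F[X] (RatFunc F) f) := by
    intro f
    refine IsIntegral.of_mem_of_fg _ hXint.fg_adjoin_singleton _ ?_
    have : algebraMap F[X] (RatFunc F) f = Polynomial.aeval (RatFunc.X : RatFunc F) (f.map (algebraMap F L)) := by
      rw [Polynomial.aeval_map_algebraMap, key]
    rw [this]
    exact Polynomial.aeval_mem_adjoin_singleton _ _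
  have halg : ∀ x : RatFunc F, IsAlgebraic L x := by
    intro x
    have hx : x = algebraMap F[X] (RatFunc F) (RatFunc.num x) *
        (algebraMap F[X] (RatFunc F) (RatFunc.denom x))⁻¹ := by
      rw [← div_eq_mul_inv, RatFunc.num_div_denom]
    rw [hx]
    exact ((h1 _).mul (isAlgebraic_iff_isIntegral.mp
      ((h1 (RatFunc.denom x)).isAlgebraic.inv))).isAlgebraic
  -- pick a nonzero element of I
  obtain ⟨x, hxI, hx0⟩ := Submodule.exists_mem_ne_zero_of_ne_bot hI
  set x0 : RatFunc F := (x : RatFunc F) with hx0def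
  have hx0' : x0 ≠ 0 := by
    simpa [hx0def, ZeroMemClass.coe_eq_zero] using hx0
  obtain ⟨p, hp0, hpev⟩ := halg x0
  set n := p.natDegree with hn
  -- clear denominators of the coefficients
  have hcs : ∀ i : ℕ, ∃ rs : F[X] × F[X],
      ((p.coeff i : RatFunc F)) * Polynomial.aeval a rs.2 = Polynomial.aeval a rs.1 ∧
        Polynomial.aeval a rs.2 ≠ 0 := by
    intro i
    by_cases h : p.coeff i = 0
    · exact ⟨(0, 1), by simp [h], by simp⟩
    · obtain ⟨r, s, hrs⟩ := (IntermediateField.mem_adjoin_simple_iff F _).mp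
        (SetLike.coe_mem (p.coeff i))
      have hs : Polynomial.aeval a s ≠ 0 := by
        intro h0
        apply h
        have : ((p.coeff i : RatFunc F)) = 0 := by rw [hrs, h0, div_zero]
        exact_mod_cast ZeroMemClass.coe_eq_zero.mp this
      refine ⟨(r, s), ?_, hs⟩
      rw [hrs]
      field_simp
  choose rs hrs hsne using hcs
  set D : RatFunc F := ∏ j ∈ Finset.range (n + 1), Polynomial.aeval a (rs j).2 with hD
  have hD0 : D ≠ 0 := Finset.prod_ne_zero_iff.mpr fun j _ => hsne j
  set d : ℕ → RatFunc F := fun i => (p.coeff i : RatFunc F) * D with hd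
  have hd_mem : ∀ i ∈ Finset.range (n + 1), d i ∈ Algebra.adjoin F ({a} : Set (RatFunc F)) := by
    intro i hi
    have : d i = Polynomial.aeval a (rs i).1 *
        ∏ j ∈ (Finset.range (n + 1)).erase i, Polynomial.aeval a (rs j).2 := by
      simp only [hd, hD]
      rw [← Finset.mul_prod_erase _ _ hi, ← mul_assoc, hrs i]
    rw [this]
    exact mul_mem (Polynomial.aeval_mem_adjoin_singleton _ _)
      (Subalgebra.prod_mem _ fun j _ => Polynomial.aeval_mem_adjoin_singleton _ _)
  -- the main polynomial identity
  have heq : ∑ i ∈ Finset.range (n + 1), ((p.coeff i : RatFunc F)) * x0 ^ i = 0 := by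
    have h := Polynomial.aeval_eq_sum_range (R := L) (p := p) x0
    rw [hpev] at h
    rw [show (0 : RatFunc F) = ∑ i ∈ Finset.range (p.natDegree + 1), p.coeff i • x0 ^ i from h]
    apply Finset.sum_congr rfl
    intro i _
    rw [Algebra.smul_def]
    rfl
  have heq2 : ∑ i ∈ Finset.range (n + 1), d i * x0 ^ i = 0 := by
    have : ∑ i ∈ Finset.range (n + 1), d i * x0 ^ i =
        (∑ i ∈ Finset.range (n + 1), ((p.coeff i : RatFunc F)) * x0 ^ i) * D := by
      rw [Finset.sum_mul]
      exact Finset.sum_congr rfl fun i _ => by simp only [hd]; ring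
    rw [this, heq, zero_mul]
  -- d is not identically zero on range (n+1)
  have hdn : d n ≠ 0 := by
    have hcoeffn : p.coeff n ≠ 0 := by
      rw [hn, ← Polynomial.leadingCoeff]
      exact Polynomial.leadingCoeff_ne_zero.mpr hp0
    have hcn : ((p.coeff n : RatFunc F)) ≠ 0 := by
      intro h0
      exact hcoeffn (ZeroMemClass.coe_eq_zero.mp h0)
    exact mul_ne_zero hcn hD0
  -- least index with nonzero coefficient
  set S : Finset ℕ := (Finset.range (n + 1)).filter (fun i => d i ≠ 0) with hS
  have hSne : S.Nonempty := ⟨n, by simp [hS, hdn]⟩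
  set k : ℕ := S.min' hSne with hk
  have hkS : k ∈ S := Finset.min'_mem _ _
  have hkn : k ≤ n := by
    have := (Finset.mem_filter.mp hkS).1
    simpa [Nat.lt_succ_iff] using this
  have hdk : d k ≠ 0 := (Finset.mem_filter.mp hkS).2
  have hlow : ∀ i < k, d i = 0 := by
    intro i hi
    by_contra h
    have : i ∈ S := Finset.mem_filter.mpr ⟨Finset.mem_range.mpr (by omega), h⟩
    exact absurd (Finset.min'_le _ _ this) (by omega)
  -- reduce the relation
  have heq3 : ∑ i ∈ Finset.Ico k (n + 1), d i * x0 ^ i = 0 := by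
    have hsplit := Finset.sum_range_add_sum_Ico (fun i => d i * x0 ^ i)
      (show k ≤ n + 1 by omega)
    have hz : ∑ i ∈ Finset.range k, d i * x0 ^ i = 0 :=
      Finset.sum_eq_zero fun i hi => by
        rw [hlow i (Finset.mem_range.mp hi), zero_mul]
    rw [← hsplit, hz, zero_add] at heq2
    exact heq2
  have heq4 : ∑ i ∈ Finset.range (n + 1 - k), d (k + i) * x0 ^ i = 0 := by
    rw [Finset.sum_Ico_eq_sum_range] at heq3
    have : ∑ i ∈ Finset.range (n + 1 - k), d (k + i) * x0 ^ (k + i) =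
        x0 ^ k * ∑ i ∈ Finset.range (n + 1 - k), d (k + i) * x0 ^ i := by
      rw [Finset.mul_sum]
      exact Finset.sum_congr rfl fun i _ => by rw [pow_add]; ring
    rw [this] at heq3
    exact (mul_eq_zero.mp heq3).resolve_left (pow_ne_zero _ hx0')
  have hm : n + 1 - k = (n - k) + 1 := by omega
  rw [hm, Finset.sum_range_succ'] at heq4
  -- heq4 : ∑ i ∈ range (n-k), d (k+(i+1)) * x0^(i+1) + d (k+0) * x0^0 = 0
  have hdk_eq : d k = -∑ i ∈ Finset.range (n - k), d (k + (i + 1)) * x0 ^ (i + 1) := by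
    have := heq4
    simp only [add_zero, pow_zero, mul_one] at this
    linear_combination this
  -- lift the coefficients to R
  have hlift : ∀ i : ℕ, ∃ e : R, (e : RatFunc F) = d i ∧
      e ∈ Algebra.adjoin F ({(α : R)} : Set R) := by
    intro i
    by_cases hi : i ∈ Finset.range (n + 1)
    · have hmem := hd_mem i hi
      have hmap : (Algebra.adjoin F ({(α : R)} : Set R)).map R.val =
          Algebra.adjoin F ({a} : Set (RatFunc F)) := by
        rw [AlgHom.map_adjoin, Set.image_singleton]
        rfl
      rw [← hmap] at hmem
      obtain ⟨e, he, hev⟩ := hmem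
      exact ⟨e, hev, he⟩
    · refine ⟨0, ?_, zero_mem _⟩
      have : p.coeff i = 0 := Polynomial.coeff_eq_zero_of_natDegree_lt
        (by simpa [Nat.lt_succ_iff, not_le] using Finset.mem_range.not.mp hi)
      simp [hd, this]
  choose e hev hemem using hlift
  refine ⟨e k, ?_, ?_, ?_⟩
  · -- e k ∈ I
    have hkey : e k = -∑ i ∈ Finset.range (n - k), e (k + (i + 1)) * x ^ (i + 1) := by
      apply Subtype.coe_injective
      push_cast
      rw [hev k, hdk_eq]
      congr 1
      refine Finset.sum_congr rfl fun i _ => ?_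
      rw [hev (k + (i + 1))]
    rw [hkey]
    refine neg_mem (Submodule.sum_mem _ fun i _ => ?_)
    exact I.mul_mem_left _ (I.pow_mem_of_mem hxI _ (Nat.succ_pos _))
  · intro h
    apply hdk
    rw [← hev k, h, ZeroMemClass.coe_zero]
  · refine Algebra.adjoin_mono ?_ (hemem k)
    intro y hy
    rw [Set.mem_singleton_iff.mp hy]
    exact Set.mem_insert _ _
end

section
/- Let R be an infinite integral domain with fraction field K, n ≥ 2, and let u₁,…,u_{k-1} span a proper subspace U ⊊ V₂ = span(e₂,…,eₙ) ⊆ Kⁿ. Then the group EL_n(R) ∩ (pointwise stabilizer in GL_n(K) of the lines K·e₁ and K·(uᵢ + tᵢe₁) for given tᵢ ∈ K) contains an infinite subgroup isomorphic to the additive group of R (after clearing denominators of a functional vanishing on U). -/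
/-!
Since `U < V₂`, the subspace `U + K e₁` is proper, so some nonzero functional `c` vanishes
on it; clearing denominators, `c` has coordinates in `R`. As `c₁ = 0`, the matrix `e₁ cᵀ`
squares to zero, so `r ↦ 1 + r e₁ cᵀ` is an injective homomorphism from `(R, +)`. Each value
is the product of the commuting elementary matrices `1 + r cⱼ E₁ⱼ`, and it fixes every vector
killed by `c`, in particular `e₁` and each `uᵢ + tᵢ e₁`.
-/

open Matrix
open LinearMap (ker proj)

section RowTransvection

variable {n R K : Type*} [Fintype n] [DecidableEq n] [CommRing R] [CommRing K] [Algebra R K]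

theorem one_add_vecMulVec_mul_of_dotProduct_eq_zero {x y z : n → K} (h : y ⬝ᵥ x = 0) :
    (1 + vecMulVec x y) * (1 + vecMulVec x z) = 1 + vecMulVec x (y + z) := by
  rw [mul_add, add_mul, add_mul, vecMulVec_mul_vecMulVec, h, zero_smul, vecMulVec_zero,
    vecMulVec_add]
  simp only [one_mul, mul_one, add_zero]
  abel

variable (K) in
def rowTransvection (i : n) :
    Multiplicative (ker (proj i : (n → K) →ₗ[K] K)) →* GL n K :=
  MonoidHom.toHomUnits
    { toFun y := 1 + vecMulVec (Pi.single i 1) (y.toAdd : n → K)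
      map_one' := by simp
      map_mul' y z := (one_add_vecMulVec_mul_of_dotProduct_eq_zero <| by
        rw [dotProduct_single_one]; exact LinearMap.mem_ker.mp y.toAdd.2).symm }

variable {i : n}

theorem coe_rowTransvection (y : Multiplicative (ker (proj i : (n → K) →ₗ[K] K))) :
    (rowTransvection K i y : Matrix n n K) = 1 + vecMulVec (Pi.single i 1) (y.toAdd : n → K) :=
  rfl

theorem rowTransvection_injective : Function.Injective (rowTransvection K i) := by
  intro y z h
  ext j
  simpa [coe_rowTransvection, vecMulVec_apply] using
    congrArg (fun g : GL n K => (g : Matrix n n K) i j) h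

theorem rowTransvection_mulVec (y : Multiplicative (ker (proj i : (n → K) →ₗ[K] K)))
    (v : n → K) :
    (rowTransvection K i y : Matrix n n K) *ᵥ v
      = v + ((y.toAdd : n → K) ⬝ᵥ v) • Pi.single i 1 := by
  rw [coe_rowTransvection, add_mulVec, one_mulVec, vecMulVec_mulVec, op_smul_eq_smul]

theorem rowTransvection_ofAdd_single {j : n} {z : K}
    (hz : Pi.single j z ∈ ker (proj i : (n → K) →ₗ[K] K)) :
    (rowTransvection K i (Multiplicative.ofAdd ⟨Pi.single j z, hz⟩) : Matrix n n K)
      = transvection i j z := by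
  rw [coe_rowTransvection, transvection]
  congr 1
  ext k l
  simp only [vecMulVec_apply, Matrix.single_apply, Pi.single_apply]
  split_ifs <;> simp_all

variable (n R K) in
/-- The group `EL_n(R) ≤ GL_n(K)`. -/
def elementarySubgroup : Subgroup (GL n K) :=
  Subgroup.closure {g | ∃ (i j : n) (x : R), i ≠ j ∧
    (g : Matrix n n K) = transvection i j (algebraMap R K x)}

theorem rowTransvection_mem_elementarySubgroup
    (y : ker (proj i : (n → K) →ₗ[K] K))
    (hy : ∀ j, IsLocalization.IsInteger R ((y : n → K) j)) :
    rowTransvection K i (Multiplicative.ofAdd y) ∈ elementarySubgroup n R K := by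
  have hyi : (y : n → K) i = 0 := LinearMap.mem_ker.mp y.2
  have hsingle (j : n) :
      (Pi.single j ((y : n → K) j) : n → K) ∈ ker (proj i : (n → K) →ₗ[K] K) := by
    by_cases hj : j = i
    · simp [hj, hyi]
    · simp [Pi.single_eq_of_ne' hj]
  have hy_sum : y = ∑ j, ⟨Pi.single j ((y : n → K) j), hsingle j⟩ :=
    Subtype.ext (by simp [Finset.univ_sum_single])
  show Multiplicative.ofAdd y ∈ (elementarySubgroup n R K).comap (rowTransvection K i)
  rw [hy_sum, ofAdd_sum]
  refine Subgroup.prod_mem _ fun j _ => ?_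
  rw [Subgroup.mem_comap]
  by_cases hj : i = j
  · convert one_mem (elementarySubgroup n R K)
    ext1
    rw [rowTransvection_ofAdd_single, ← hj, hyi, transvection_zero, Units.val_one]
  · obtain ⟨x, hx⟩ := hy j
    exact Subgroup.subset_closure ⟨i, j, x, hj, by rw [rowTransvection_ofAdd_single, hx]⟩

variable (R) in
/-- `r ↦ 1 + r eᵢ cᵀ`. -/
def rowTransvectionLine (c : ker (proj i : (n → K) →ₗ[K] K)) :
    Multiplicative R →* GL n K :=
  (rowTransvection K i).comp <| AddMonoidHom.toMultiplicative <|
    (LinearMap.toSpanSingleton K _ c).toAddMonoidHom.comp (algebraMap R K).toAddMonoidHom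

variable {c : ker (proj i : (n → K) →ₗ[K] K)}

theorem rowTransvectionLine_ofAdd (r : R) :
    rowTransvectionLine R c (Multiplicative.ofAdd r)
      = rowTransvection K i (Multiplicative.ofAdd (algebraMap R K r • c)) :=
  rfl

theorem rowTransvectionLine_injective [IsDomain K] (hR : Function.Injective (algebraMap R K))
    (hc : c ≠ 0) : Function.Injective (rowTransvectionLine R c) :=
  rowTransvection_injective.comp <| Multiplicative.ofAdd.injective.comp <|
    ((smul_left_injective K hc).comp hR).comp Multiplicative.toAdd.injective

theorem rowTransvectionLine_mulVec_of_dotProduct_eq_zero {v : n → K}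
    (hv : (c : n → K) ⬝ᵥ v = 0) (r : R) :
    (rowTransvectionLine R c (Multiplicative.ofAdd r) : Matrix n n K) *ᵥ v = v := by
  rw [rowTransvectionLine_ofAdd, rowTransvection_mulVec, toAdd_ofAdd, Submodule.coe_smul,
    smul_dotProduct, hv, smul_zero, zero_smul, add_zero]

theorem rowTransvectionLine_mem_elementarySubgroup
    (hc : ∀ j, IsLocalization.IsInteger R ((c : n → K) j)) (r : R) :
    rowTransvectionLine R c (Multiplicative.ofAdd r) ∈ elementarySubgroup n R K := by
  rw [rowTransvectionLine_ofAdd]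
  refine rowTransvection_mem_elementarySubgroup _ fun j => ?_
  rw [Submodule.coe_smul, Pi.smul_apply, algebraMap_smul]
  exact IsLocalization.isInteger_smul (hc j)

end RowTransvection

section LinearAlgebra

variable {n K : Type*} [Field K]

theorem sup_span_single_lt_top [DecidableEq n] {i : n} {U : Submodule K (n → K)}
    (hU : U < ker (proj i : (n → K) →ₗ[K] K)) :
    U ⊔ K ∙ Pi.single i 1 < ⊤ := by
  have hdisj : Disjoint (ker (proj i : (n → K) →ₗ[K] K))
      (K ∙ Pi.single i 1) :=
    (Submodule.disjoint_span_singleton' (by simp)).mpr (by simp)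
  calc U ⊔ K ∙ Pi.single i 1
      < ker (proj i) ⊔ K ∙ Pi.single i 1 :=
        sup_lt_sup_of_lt_of_inf_le_inf hU (by simp [hdisj.eq_bot])
    _ ≤ ⊤ := le_top

theorem Submodule.exists_ne_zero_dotProduct_eq_zero_of_lt_top [Fintype n] [DecidableEq n]
    {W : Submodule K (n → K)} (hW : W < ⊤) :
    ∃ w : n → K, w ≠ 0 ∧ ∀ v ∈ W, w ⬝ᵥ v = 0 := by
  obtain ⟨f, hf, hWf⟩ := W.exists_le_ker_of_lt_top hW
  refine ⟨(dotProductEquiv K n).symm f, by simpa using hf, fun v hv => ?_⟩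
  rw [← (dotProductEquiv K n).apply_symm_apply f] at hWf
  exact hWf hv

theorem Submodule.exists_isInteger_ne_zero_dotProduct_eq_zero_of_lt_top (R : Type*)
    [Fintype n] [DecidableEq n] [CommRing R] [Algebra R K] [IsFractionRing R K]
    {W : Submodule K (n → K)} (hW : W < ⊤) :
    ∃ c : n → K, c ≠ 0 ∧ (∀ v ∈ W, c ⬝ᵥ v = 0) ∧
      ∀ j, IsLocalization.IsInteger R (c j) := by
  obtain ⟨w, hw, hwW⟩ := exists_ne_zero_dotProduct_eq_zero_of_lt_top hW
  obtain ⟨b, hb⟩ := IsLocalization.exist_integer_multiples_of_finite (nonZeroDivisors R) w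
  refine ⟨(b : R) • w, ?_, fun v hv => by rw [smul_dotProduct, hwW v hv, smul_zero], hb⟩
  rw [← algebraMap_smul K]
  exact smul_ne_zero ((IsLocalization.map_units K b).ne_zero) hw

theorem Submodule.map_span_singleton_of_apply_eq {M : Type*} [AddCommGroup M] [Module K M]
    {f : M →ₗ[K] M} {v : M} (hv : f v = v) : (K ∙ v).map f = K ∙ v := by
  rw [Submodule.map_span, Set.image_singleton, hv]

end LinearAlgebra

/-- Let `R` be an infinite integral domain with fraction field `K`, `n ≥ 2`, and let
`u₁, …, u_{k-1}` span a proper subspace `U ⊊ V₂ = span(e₂,…,eₙ) ⊆ Kⁿ`. Then, for any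
scalars `tᵢ ∈ K`, the intersection of `EL_n(R)` with the stabilizer in `GL_n(K)` of the
lines `K·e₁` and `K·(uᵢ + tᵢe₁)` contains an infinite subgroup isomorphic to the
additive group of `R`: there is an injective homomorphism `r ↦ T_r` from `(R,+)` landing
in it. -/
theorem stmt_16 (R : Type*) [CommRing R]
    (K : Type*) [Field K] [Algebra R K] [IsFractionRing R K]
    (n : ℕ) (hn : 2 ≤ n) (m : ℕ) (u : Fin m → (Fin n → K))
    (hU : Submodule.span K (Set.range u) <
      LinearMap.ker (LinearMap.proj (⟨0, by omega⟩ : Fin n) : (Fin n → K) →ₗ[K] K))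
    (t : Fin m → K) :
    ∃ T : Multiplicative R →* Matrix.GeneralLinearGroup (Fin n) K,
      Function.Injective T ∧
      ∀ r : R,
        T (Multiplicative.ofAdd r) ∈
          Subgroup.closure {g : Matrix.GeneralLinearGroup (Fin n) K |
            ∃ (i j : Fin n) (x : R), i ≠ j ∧
              (g : Matrix (Fin n) (Fin n) K)
                = 1 + Matrix.single i j (algebraMap R K x)} ∧
        Submodule.map (Matrix.mulVecLin
            ((T (Multiplicative.ofAdd r) : Matrix (Fin n) (Fin n) K)))
            (Submodule.span K {(Pi.single (⟨0, by omega⟩ : Fin n) 1 : Fin n → K)})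
          = Submodule.span K {(Pi.single (⟨0, by omega⟩ : Fin n) 1 : Fin n → K)} ∧
        ∀ i : Fin m,
          Submodule.map (Matrix.mulVecLin
              ((T (Multiplicative.ofAdd r) : Matrix (Fin n) (Fin n) K)))
              (Submodule.span K
                {u i + t i • (Pi.single (⟨0, by omega⟩ : Fin n) 1 : Fin n → K)})
            = Submodule.span K
                {u i + t i • (Pi.single (⟨0, by omega⟩ : Fin n) 1 : Fin n → K)} := by
  set e₀ : Fin n := ⟨0, by omega⟩
  set W := Submodule.span K (Set.range u) ⊔ K ∙ (Pi.single e₀ 1 : Fin n → K)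
  have he₀ : Pi.single e₀ 1 ∈ W :=
    Submodule.mem_sup_right (Submodule.mem_span_singleton_self _)
  obtain ⟨c, hc, hcW, hcR⟩ :=
    Submodule.exists_isInteger_ne_zero_dotProduct_eq_zero_of_lt_top R (sup_span_single_lt_top hU)
  have hc₀ : c ∈ ker (proj e₀ : (Fin n → K) →ₗ[K] K) := by
    simpa [dotProduct_single_one] using hcW _ he₀
  have hfix (r : R) {v} (hv : v ∈ W) :
      Matrix.mulVecLin
        (rowTransvectionLine R ⟨c, hc₀⟩ (Multiplicative.ofAdd r) : Matrix _ _ K) v = v :=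
    rowTransvectionLine_mulVec_of_dotProduct_eq_zero (hcW v hv) r
  refine ⟨rowTransvectionLine R ⟨c, hc₀⟩,
    rowTransvectionLine_injective (IsFractionRing.injective R K) (by simpa using hc),
    fun r => ⟨rowTransvectionLine_mem_elementarySubgroup hcR r,
      Submodule.map_span_singleton_of_apply_eq (hfix r he₀), fun i => ?_⟩⟩
  have hu : u i ∈ W := Submodule.mem_sup_left (Submodule.subset_span ⟨i, rfl⟩)
  exact Submodule.map_span_singleton_of_apply_eq
    (hfix r (add_mem hu (Submodule.smul_mem _ _ he₀)))
end
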